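/- For all α > 0, λ > 0, and p ∈ (0, 1/2], the asymmetric right p-fence of the Exponentiated Fréchet distribution is nonnegative: ((2-p)/p)·(-log(1-p^{1/α}))^{-1/λ} - 2((1-p)/p)·(-log(1-2^{-1/α}))^{-1/λ} ≥ 0. -/
import Mathlib


open Real Set

theorem right_fence_nonneg (a lam p : ℝ) (ha : 0 < a) (hlam : 0 < lam)
    (hp : p ∈ Set.Ioc (0 : ℝ) (1 / 2)) :
    (2 - p) / p * (-Real.log (1 - p ^ (1 / a))) ^ (-(1 / lam)) -
      2 * ((1 - p) / p) * (-Real.log (1 - 2 ^ (-(1 / a)))) ^ (-(1 / lam)) ≥ 0 := by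
  obtain ⟨hp0, hp2⟩ := hp
  have ha' : 0 < 1 / a := by positivity
  set u : ℝ := p ^ (1 / a) with hu
  set v : ℝ := 2 ^ (-(1 / a)) with hv
  have hv_eq : v = (1/2 : ℝ) ^ (1 / a) := by
    rw [hv, Real.rpow_neg (by norm_num), ← Real.inv_rpow (by norm_num)]
    norm_num
  have hu0 : 0 < u := Real.rpow_pos_of_pos hp0 _
  have hv0 : 0 < v := Real.rpow_pos_of_pos (by norm_num) _
  have huv : u ≤ v := by
    rw [hv_eq]
    exact Real.rpow_le_rpow hp0.le hp2 ha'.le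
  have hv1 : v < 1 := by
    rw [hv_eq]
    calc (1/2 : ℝ) ^ (1/a) < 1 ^ (1/a) :=
      Real.rpow_lt_rpow (by norm_num) (by norm_num) ha'
    _ = 1 := Real.one_rpow _
  have hu1 : u < 1 := lt_of_le_of_lt huv hv1
  -- log facts
  have h1u : 0 < 1 - u := by linarith
  have h1v : 0 < 1 - v := by linarith
  have hlogu : 0 < -Real.log (1 - u) := by
    have := Real.log_neg h1u (by linarith)
    linarith
  have hlogv : 0 < -Real.log (1 - v) := by
    have := Real.log_neg h1v (by linarith)
    linarith
  have hloglog : -Real.log (1 - u) ≤ -Real.log (1 - v) := by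
    have := Real.log_le_log h1v (by linarith : 1 - v ≤ 1 - u)
    linarith
  have hAB : (-Real.log (1 - v)) ^ (-(1 / lam)) ≤ (-Real.log (1 - u)) ^ (-(1 / lam)) :=
    Real.rpow_le_rpow_of_nonpos hlogu hloglog (neg_nonpos.mpr (by positivity))
  have hApos : 0 < (-Real.log (1 - u)) ^ (-(1 / lam)) := Real.rpow_pos_of_pos hlogu _
  have hBpos : 0 < (-Real.log (1 - v)) ^ (-(1 / lam)) := Real.rpow_pos_of_pos hlogv _
  have hcoef : 2 * ((1 - p) / p) ≤ (2 - p) / p := by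
    have h : 2 * ((1 - p) / p) = (2 - 2 * p) / p := by ring
    rw [h, div_le_div_iff₀ hp0 hp0]
    nlinarith
  have hc0 : (0:ℝ) ≤ (2 - p) / p := div_nonneg (by linarith) hp0.le
  have := mul_le_mul hcoef hAB hBpos.le hc0
  linarith
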